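/- arXiv:2206.10217 — 2 statements merged into one kernel-verified Lean document; each statement's English description precedes it below -/
import Mathlib

section
/- For every N ≥ 1, every continuous function H : ℝ^N → ℝ, every β > 0, every m ∈ ℝ^N with ‖m‖₂² ≤ N, every δ, ε > 0, and every integer k ≥ 1: (1/N) log ∫_{Band(m,δ)} e^{β H(σ)} μ_N(dσ) ≥ (β/N) H(m) + (1/(kN)) log ∫_{Band_k(m,δ,ε)} exp( β Σ_{i=1}^k ( H(σ^i) − H(m) ) ) μ_N^{⊗k}(dσ¹ ⋯ dσ^k). -/
open MeasureTheory ProbabilityTheory Filter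
open scoped ENNReal NNReal

noncomputable section

/-- Euclidean dot product on `ℝ^N`. -/
def dotp {N : ℕ} (σ τ : Fin N → ℝ) : ℝ := ∑ i, σ i * τ i

/-- The sphere `S_N = {σ : ‖σ‖₂² = N}`. -/
def sphereSet (N : ℕ) : Set (Fin N → ℝ) := {σ | ∑ i, (σ i) ^ 2 = (N : ℝ)}

/-- The mixture `ξ(x) = Σ_{k=2}^P c_k² x^k`. -/
def xiFun (P : ℕ) (c : ℕ → ℝ) (x : ℝ) : ℝ := ∑ k ∈ Finset.Icc 2 P, (c k) ^ 2 * x ^ k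

/-- `ξ'`. -/
def xiD1 (P : ℕ) (c : ℕ → ℝ) (x : ℝ) : ℝ :=
  ∑ k ∈ Finset.Icc 2 P, (k : ℝ) * (c k) ^ 2 * x ^ (k - 1)

/-- `ξ''`. -/
def xiD2 (P : ℕ) (c : ℕ → ℝ) (x : ℝ) : ℝ :=
  ∑ k ∈ Finset.Icc 2 P, (k : ℝ) * ((k : ℝ) - 1) * (c k) ^ 2 * x ^ (k - 2)

/-- The mixed p-spin Hamiltonian built from couplings `g`. -/
def hamiltonian (N P : ℕ) (c : ℕ → ℝ) (g : (k : ℕ) → (Fin k → Fin N) → ℝ)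
    (σ : Fin N → ℝ) : ℝ :=
  ∑ k ∈ Finset.Icc 2 P, c k * (N : ℝ) ^ (-(((k : ℝ) - 1) / 2)) *
    ∑ j : Fin k → Fin N, g k j * ∏ i, σ (j i)

/-- Index set for the entries of all the coupling tensors. -/
abbrev GIdx (N P : ℕ) : Type := Σ k : {k : ℕ // k ∈ Finset.Icc 2 P}, (Fin (k : ℕ) → Fin N)

/-- Flatten the couplings into a single Gaussian vector. -/
def flatten (N P : ℕ) (g : (k : ℕ) → (Fin k → Fin N) → ℝ) : GIdx N P → ℝ :=
  fun i => g i.1 i.2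

/-- The couplings `(G^{(k)})_{2 ≤ k ≤ P}` are i.i.d. standard Gaussians. -/
def StdGaussianCouplings {Ω : Type*} [MeasureSpace Ω] (N P : ℕ)
    (G : Ω → (k : ℕ) → (Fin k → Fin N) → ℝ) : Prop :=
  Measure.map (fun ω => flatten N P (G ω)) ℙ = Measure.pi fun _ : GIdx N P => gaussianReal 0 1

/-- The maximum of the Hamiltonian over the sphere. -/
def maxH (N P : ℕ) (c : ℕ → ℝ) (g : (k : ℕ) → (Fin k → Fin N) → ℝ) : ℝ :=
  ⨆ σ : sphereSet N, hamiltonian N P c g σ.1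


/-- Euclidean gradient of the Hamiltonian. -/
def gradH (N P : ℕ) (c : ℕ → ℝ) (g : (k : ℕ) → (Fin k → Fin N) → ℝ)
    (σ : Fin N → ℝ) : Fin N → ℝ :=
  fun i => fderiv ℝ (hamiltonian N P c g) σ (Pi.single i 1)

/-- Euclidean Hessian of the Hamiltonian, as a bilinear form. -/
def hessH (N P : ℕ) (c : ℕ → ℝ) (g : (k : ℕ) → (Fin k → Fin N) → ℝ)
    (σ v w : Fin N → ℝ) : ℝ :=
  fderiv ℝ (fun τ => fderiv ℝ (hamiltonian N P c g) τ w) σ v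

/-- `σ` is a spherical critical point: `∇H(σ) = (⟨∇H(σ),σ⟩/N) σ`. -/
def IsCritPt (N P : ℕ) (c : ℕ → ℝ) (g : (k : ℕ) → (Fin k → Fin N) → ℝ)
    (σ : Fin N → ℝ) : Prop :=
  σ ∈ sphereSet N ∧ gradH N P c g σ = (dotp (gradH N P c g σ) σ / N) • σ

/-- Cardinality of a set, valued in `ℝ≥0∞`. -/
def ecount {α : Type*} (s : Set α) : ℝ≥0∞ := ∑' _ : s, 1

/-- Spherical critical points with energy at least `Nη`. -/
def crtSet (N P : ℕ) (c : ℕ → ℝ) (g : (k : ℕ) → (Fin k → Fin N) → ℝ)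
    (η : ℝ) : Set (Fin N → ℝ) :=
  {σ | IsCritPt N P c g σ ∧ (N : ℝ) * η ≤ hamiltonian N P c g σ}

/-- Index (number of negative eigenvalues) of the spherical Hessian quadratic form at `σ`:
maximal dimension of a subspace of the tangent space on which the form is negative definite. -/
def critIndex (N P : ℕ) (c : ℕ → ℝ) (g : (k : ℕ) → (Fin k → Fin N) → ℝ)
    (σ : Fin N → ℝ) : ℕ :=
  sSup {d : ℕ | ∃ W : Submodule ℝ (Fin N → ℝ), Module.finrank ℝ W = d ∧
    (∀ v ∈ W, dotp v σ = 0) ∧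
    ∀ v ∈ W, v ≠ 0 →
      hessH N P c g σ v v - (dotp (gradH N P c g σ) σ / N) * ∑ i, (v i) ^ 2 < 0}

/-- Critical points of index `N-1-k` in the superlevel set. -/
def crtSetIdx (N P : ℕ) (c : ℕ → ℝ) (g : (k : ℕ) → (Fin k → Fin N) → ℝ)
    (η : ℝ) (k : ℕ) : Set (Fin N → ℝ) :=
  {σ | σ ∈ crtSet N P c g η ∧ critIndex N P c g σ = N - 1 - k}

/-- Coefficients of the pure p-spin model. -/
def pureC (p : ℕ) : ℕ → ℝ := fun k => if k = p then 1 else 0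

/-- The uniform probability measure on the sphere `S_N`. -/
def sphereUniform (N : ℕ) : Measure (Fin N → ℝ) :=
  Measure.map (fun g i => Real.sqrt N * g i / Real.sqrt (∑ j, (g j) ^ 2))
    (Measure.pi fun _ : Fin N => gaussianReal 0 1)

/-- The band around `m`. -/
def band (N : ℕ) (m : Fin N → ℝ) (δ : ℝ) : Set (Fin N → ℝ) :=
  {σ | σ ∈ sphereSet N ∧ |dotp (σ - m) m| < N * δ}

/-- `k`-tuples from the band with pairwise overlaps close to `⟨m,m⟩`. -/
def bandK (N k : ℕ) (m : Fin N → ℝ) (δ ε : ℝ) : Set (Fin k → Fin N → ℝ) :=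
  {σs | (∀ i, σs i ∈ band N m δ) ∧
    ∀ i j, i ≠ j → |dotp (σs i) (σs j) - dotp m m| < N * ε}

/-- `∫₀ᵗ γ(s) ds`, valued in `ℝ≥0∞`. -/
def gammaLInt (γ : ℝ → ℝ) (t : ℝ) : ℝ≥0∞ := ∫⁻ s in Set.Ioo 0 t, ENNReal.ofReal (γ s)

/-- The zero-temperature spherical Parisi functional (Crisanti–Sommers form), with the
convention `1/0 = +∞`. -/
def PFunE (P : ℕ) (c : ℕ → ℝ) (γ : ℝ → ℝ) : ℝ≥0∞ :=
  ⨅ L ∈ {L : ℝ | gammaLInt γ 1 ≤ ENNReal.ofReal L},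
    (∫⁻ t in Set.Ioo (0 : ℝ) 1,
      (ENNReal.ofReal (xiD2 P c t * (L - (gammaLInt γ t).toReal))
        + (ENNReal.ofReal (L - (gammaLInt γ t).toReal))⁻¹)) / 2

/-- The space `𝒰` of order parameters: non-decreasing, non-negative, integrable on `[0,1)`. -/
def calU : Set (ℝ → ℝ) :=
  {γ | (∀ t ∈ Set.Ico (0 : ℝ) 1, 0 ≤ γ t) ∧ MonotoneOn γ (Set.Ico 0 1) ∧
    IntegrableOn γ (Set.Ioo 0 1)}

/-- The support of `γ`: points of `[0,1]` near which `γ` is not constant. -/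
def suppGamma (γ : ℝ → ℝ) : Set ℝ :=
  {q | q ∈ Set.Icc (0 : ℝ) 1 ∧ ∀ ε > 0, ∃ s ∈ Set.Ico (0 : ℝ) 1, ∃ t ∈ Set.Ico (0 : ℝ) 1,
    |s - q| < ε ∧ |t - q| < ε ∧ γ s ≠ γ t}

/-- The superlevel set `L_N(η)`. -/
def levelSet (N P : ℕ) (c : ℕ → ℝ) (g : (k : ℕ) → (Fin k → Fin N) → ℝ)
    (η : ℝ) : Set (Fin N → ℝ) :=
  {σ | σ ∈ sphereSet N ∧ (N : ℝ) * η ≤ hamiltonian N P c g σ}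

/-- Threshold energy of the pure p-spin model. -/
def THRp (p : ℕ) : ℝ := 2 * Real.sqrt (((p : ℝ) - 1) / p)

/-- The function `J` of the pure p-spin complexity. -/
def Jp (p : ℕ) (η : ℝ) : ℝ :=
  η / (THRp p) ^ 2 * Real.sqrt (η ^ 2 - (THRp p) ^ 2)
    - Real.log (η + Real.sqrt (η ^ 2 - (THRp p) ^ 2)) + Real.log (THRp p)

/-- The annealed complexity of the pure p-spin spherical model. -/
def SigmaPure (p : ℕ) (η : ℝ) : ℝ :=
  if η ≤ 0 then Real.log ((p : ℝ) - 1) / 2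
  else if η ≤ THRp p then
    Real.log ((p : ℝ) - 1) / 2 - ((p : ℝ) - 2) / (4 * ((p : ℝ) - 1)) * η ^ 2
  else Real.log ((p : ℝ) - 1) / 2 - ((p : ℝ) - 2) / (4 * ((p : ℝ) - 1)) * η ^ 2 - Jp p η

/-- Couplings, unflattened from a vector indexed by `GIdx N P`. -/
def unflatten (N P : ℕ) (g : GIdx N P → ℝ) : (k : ℕ) → (Fin k → Fin N) → ℝ :=
  fun k j => if h : k ∈ Finset.Icc 2 P then g ⟨⟨k, h⟩, j⟩ else 0

/-- `ξ'''`. -/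
def xiD3 (P : ℕ) (c : ℕ → ℝ) (x : ℝ) : ℝ :=
  ∑ k ∈ Finset.Icc 2 P, (k : ℝ) * ((k : ℝ) - 1) * ((k : ℝ) - 2) * (c k) ^ 2 * x ^ (k - 3)

/-!
Every `k`-tuple in `Band_k(m,δ,ε)` lies in `Band(m,δ)^k`, and on that product set the integrand
`exp(β Σᵢ (H(σⁱ) - H(m)))` factorizes, so by Tonelli the replicated integral is at most
`(e^{-βH(m)} ∫_{Band} e^{βH})^k`. Taking `(1/(kN)) log` of this bound gives the claim.
-/

namespace MeasureTheory

theorem lintegral_fin_nat_prod_eq_prod {n : ℕ} {E : Type*} [MeasurableSpace E]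
    {μ : Fin n → Measure E} [∀ i, SigmaFinite (μ i)]
    {f : Fin n → E → ℝ≥0∞} (hf : ∀ i, Measurable (f i)) :
    ∫⁻ x : Fin n → E, ∏ i, f i (x i) ∂(Measure.pi μ) = ∏ i, ∫⁻ x, f i x ∂(μ i) := by
  induction n with
  | zero => simp
  | succ n ih =>
      calc
        _ = ∫⁻ x : E × (Fin n → E),
            f 0 x.1 * ∏ i : Fin n, f (Fin.succ i) (x.2 i)
            ∂((μ 0).prod (Measure.pi (fun i ↦ μ i.succ))) := by
          rw [← ((measurePreserving_piFinSuccAbove μ 0).symm).lintegral_comp_emb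
            (MeasurableEquiv.measurableEmbedding _)]
          simp_rw [MeasurableEquiv.piFinSuccAbove_symm_apply, Fin.insertNthEquiv,
            Fin.prod_univ_succ, Fin.insertNth_zero, Equiv.coe_fn_mk, Fin.cons_succ,
            Fin.zero_succAbove, cast_eq, Fin.cons_zero]
        _ = (∫⁻ x, f 0 x ∂μ 0) *
              ∫⁻ y : Fin n → E, ∏ i, f i.succ (y i) ∂(Measure.pi fun i ↦ μ i.succ) :=
          lintegral_prod_mul (hf 0).aemeasurable
            (Finset.measurable_prod _ fun (i : Fin n) _ ↦
              (hf i.succ).comp (measurable_pi_apply i)).aemeasurable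
        _ = ∏ i, ∫⁻ x, f i x ∂(μ i) := by
          rw [ih fun i ↦ hf i.succ, Fin.prod_univ_succ]

theorem setLIntegral_prod_le_pow_of_subset_univ_pi {α : Type*} [MeasurableSpace α]
    {μ : Measure α} [SigmaFinite μ] {n : ℕ} {f : α → ℝ≥0∞} (hf : Measurable f)
    {s : Set α} {T : Set (Fin n → α)} (hT : T ⊆ Set.univ.pi fun _ ↦ s) :
    ∫⁻ x in T, ∏ i, f (x i) ∂(Measure.pi fun _ ↦ μ) ≤ (∫⁻ y in s, f y ∂μ) ^ n := by
  calc ∫⁻ x in T, ∏ i, f (x i) ∂(Measure.pi fun _ ↦ μ)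
      ≤ ∫⁻ x in Set.univ.pi fun _ ↦ s, ∏ i, f (x i) ∂(Measure.pi fun _ ↦ μ) :=
        lintegral_mono_set hT
    _ = (∫⁻ y in s, f y ∂μ) ^ n := by
        rw [Measure.restrict_pi_pi, lintegral_fin_nat_prod_eq_prod fun _ ↦ hf,
          Finset.prod_const, Finset.card_univ, Fintype.card_fin]

end MeasureTheory

instance (N : ℕ) : IsFiniteMeasure (sphereUniform N) := by
  unfold sphereUniform
  infer_instance

theorem add_mul_log_le_mul_log_of_le_pow {c x : ℝ} (hx : 0 < x) {k : ℕ} (hk : k ≠ 0)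
    {I J : ℝ≥0∞} (hJ : J ≤ (I * ENNReal.ofReal (Real.exp (-c))) ^ k) :
    ((c / x : ℝ) : EReal) + ((1 / (k * x) : ℝ) : EReal) * ENNReal.log J
      ≤ ((1 / x : ℝ) : EReal) * ENNReal.log I := by
  have key : ENNReal.ofReal (Real.exp (c / x)) * J ^ (1 / (k * x)) ≤ I ^ (1 / x) :=
    calc ENNReal.ofReal (Real.exp (c / x)) * J ^ (1 / (k * x))
        ≤ ENNReal.ofReal (Real.exp (c / x)) *
            ((I * ENNReal.ofReal (Real.exp (-c))) ^ k) ^ (1 / (k * x)) := by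
          gcongr
      _ = ENNReal.ofReal (Real.exp (c / x)) *
            (I ^ (1 / x) * ENNReal.ofReal (Real.exp (-c / x))) := by
          have hexp : (k : ℝ) * (1 / (k * x)) = 1 / x := by field_simp
          rw [← ENNReal.rpow_natCast, ← ENNReal.rpow_mul, hexp,
            ENNReal.mul_rpow_of_nonneg _ _ (by positivity),
            ENNReal.ofReal_rpow_of_nonneg (Real.exp_pos _).le (by positivity),
            ← Real.exp_mul, mul_one_div]
      _ = I ^ (1 / x) := by
          rw [mul_left_comm, ← ENNReal.ofReal_mul (Real.exp_pos _).le, ← Real.exp_add,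
            neg_div, add_neg_cancel, Real.exp_zero, ENNReal.ofReal_one, mul_one]
  have := ENNReal.log_le_log key
  rwa [ENNReal.log_mul_add, ENNReal.log_ofReal_of_pos (Real.exp_pos _), Real.log_exp,
    ENNReal.log_rpow, ENNReal.log_rpow] at this

/-- Logarithms are taken via `ENNReal.log`, valued in `EReal`, which encodes `log 0 = -∞`. -/
theorem statement_12_general (N : ℕ) (hN : 1 ≤ N)
    (H : (Fin N → ℝ) → ℝ) (hH : Continuous H)
    (β : ℝ) (m : Fin N → ℝ)
    (δ ε : ℝ) (k : ℕ) (hk : 1 ≤ k) :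
    ((β * H m / N : ℝ) : EReal)
      + ((1 / (k * N) : ℝ) : EReal) *
        ENNReal.log (∫⁻ σs in bandK N k m δ ε,
          ENNReal.ofReal (Real.exp (β * ∑ i, (H (σs i) - H m)))
            ∂(Measure.pi fun _ : Fin k => sphereUniform N))
    ≤ ((1 / N : ℝ) : EReal) *
        ENNReal.log (∫⁻ σ in band N m δ,
          ENNReal.ofReal (Real.exp (β * H σ)) ∂(sphereUniform N)) := by
  set f : (Fin N → ℝ) → ℝ≥0∞ := fun σ ↦ ENNReal.ofReal (Real.exp (β * (H σ - H m)))
  have hf : Measurable f := by fun_prop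
  have hsub : bandK N k m δ ε ⊆ Set.univ.pi fun _ ↦ band N m δ := fun σs hσs i _ ↦ hσs.1 i
  have hbandK := setLIntegral_prod_le_pow_of_subset_univ_pi (μ := sphereUniform N) hf hsub
  have hband : ∫⁻ σ in band N m δ, f σ ∂(sphereUniform N)
      = (∫⁻ σ in band N m δ, ENNReal.ofReal (Real.exp (β * H σ)) ∂(sphereUniform N))
          * ENNReal.ofReal (Real.exp (-(β * H m))) := by
    rw [← lintegral_mul_const' _ _ ENNReal.ofReal_ne_top]
    refine lintegral_congr fun σ ↦ ?_
    rw [← ENNReal.ofReal_mul (Real.exp_pos _).le, ← Real.exp_add, ← sub_eq_add_neg, ← mul_sub]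
  simp only [f, hband, ← ENNReal.ofReal_prod_of_nonneg fun _ _ ↦ (Real.exp_pos _).le,
    ← Real.exp_sum, ← Finset.mul_sum] at hbandK
  exact add_mul_log_le_mul_log_of_le_pow (by positivity) (by omega) hbandK

/-- the replicated band free energy lower-bounds the band free energy.
Logarithms are taken via `ENNReal.log`, valued in `EReal`, which encodes `log 0 = -∞`. -/
theorem statement_12 (N : ℕ) (hN : 1 ≤ N)
    (H : (Fin N → ℝ) → ℝ) (hH : Continuous H)
    (β : ℝ) (hβ : 0 < β) (m : Fin N → ℝ) (hm : ∑ i, (m i) ^ 2 ≤ (N : ℝ))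
    (δ ε : ℝ) (hδ : 0 < δ) (hε : 0 < ε) (k : ℕ) (hk : 1 ≤ k) :
    ((β * H m / N : ℝ) : EReal)
      + ((1 / (k * N) : ℝ) : EReal) *
        ENNReal.log (∫⁻ σs in bandK N k m δ ε,
          ENNReal.ofReal (Real.exp (β * ∑ i, (H (σs i) - H m)))
            ∂(Measure.pi fun _ : Fin k => sphereUniform N))
    ≤ ((1 / N : ℝ) : EReal) *
        ENNReal.log (∫⁻ σ in band N m δ,
          ENNReal.ofReal (Real.exp (β * H σ)) ∂(sphereUniform N)) :=
  statement_12_general N hN H hH β m δ ε k hk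
end
end

section
/- Let ξ(x) = Σ_{k=2}^P c_k² x^k with (c_k) not all zero, and let ℒ be the set of measurable functions γ : [0,1) → [0,∞) with ∫₀¹ ξ''(t) γ(t) dt < ∞. Define P(γ) := inf_{L ≥ ∫₀¹ γ(s) ds} ½ ∫₀¹ ( ξ''(t) Γ(t) + 1/Γ(t) ) dt with Γ(t) = L − ∫₀ᵗ γ(s) ds (convention 1/0 = +∞). Then inf_{γ ∈ ℒ} P(γ) = ∫₀¹ √( ξ''(t) ) dt. -/
open MeasureTheory ProbabilityTheory Filter
open scoped ENNReal NNReal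

noncomputable section

/-- The space `ℒ`: measurable non-negative functions on `[0,1)` with `∫₀¹ ξ''(t)γ(t) dt < ∞`. -/
def calL (P : ℕ) (c : ℕ → ℝ) : Set (ℝ → ℝ) :=
  {γ | Measurable γ ∧ (∀ t ∈ Set.Ico (0 : ℝ) 1, 0 ≤ γ t) ∧
    (∫⁻ t in Set.Ioo (0 : ℝ) 1, ENNReal.ofReal (xiD2 P c t * γ t)) < ⊤}

/-!
For `Γ > 0` the AM–GM inequality gives `ξ''(t) Γ + 1/Γ ≥ 2 √ξ''(t)`, with equality iff
`Γ = ξ''(t)^{-1/2}`; integrating yields `P(γ) ≥ ALG` for every `γ`. Conversely `ξ''^{-1/2}` is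
non-increasing, so it is of the form `L - ∫₀ᵗ γ` with `γ = (-ξ''^{-1/2})' ≥ 0`. Since `ξ''(0)` may
vanish, `γ` is cut off on `(0, ε]`; the resulting `Γ = ξ''(max t ε)^{-1/2}` gives
`P(γ) ≤ ∫₀¹ √ξ''(max t ε) dt`, which tends to `ALG` as `ε → 0`.
-/

open Set

section Mixture

variable (P : ℕ) (c : ℕ → ℝ)

theorem xiD2_nonneg {t : ℝ} (ht : 0 ≤ t) : 0 ≤ xiD2 P c t := by
  refine Finset.sum_nonneg fun k hk => ?_
  have hk : (2 : ℝ) ≤ k := by exact_mod_cast (Finset.mem_Icc.1 hk).1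
  have : (0 : ℝ) ≤ k - 1 := by linarith
  positivity

theorem monotoneOn_xiD2 : MonotoneOn (xiD2 P c) (Ici 0) := by
  intro s hs t _ hst
  refine Finset.sum_le_sum fun k hk => ?_
  have hk : (2 : ℝ) ≤ k := by exact_mod_cast (Finset.mem_Icc.1 hk).1
  have : (0 : ℝ) ≤ k - 1 := by linarith
  exact mul_le_mul_of_nonneg_left (pow_le_pow_left₀ hs hst _) (by positivity)

theorem xiD3_nonneg {t : ℝ} (ht : 0 ≤ t) : 0 ≤ xiD3 P c t := by
  refine Finset.sum_nonneg fun k hk => ?_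
  have hk : (2 : ℝ) ≤ k := by exact_mod_cast (Finset.mem_Icc.1 hk).1
  have : (0 : ℝ) ≤ k - 1 := by linarith
  have : (0 : ℝ) ≤ k - 2 := by linarith
  positivity

theorem continuous_xiD2 : Continuous (xiD2 P c) := by
  unfold xiD2
  fun_prop

theorem continuous_xiD3 : Continuous (xiD3 P c) := by
  unfold xiD3
  fun_prop

theorem hasDerivAt_xiD2 (t : ℝ) : HasDerivAt (xiD2 P c) (xiD3 P c t) t := by
  unfold xiD2 xiD3
  refine HasDerivAt.fun_sum fun k hk => ?_
  have hk : 2 ≤ k := (Finset.mem_Icc.1 hk).1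
  refine ((hasDerivAt_pow (k - 2) t).const_mul ((k : ℝ) * ((k : ℝ) - 1) * c k ^ 2)).congr_deriv ?_
  rw [show k - 2 - 1 = k - 3 by omega, Nat.cast_sub hk]
  push_cast
  ring

/-- The optimal order parameter `(-ξ''^{-1/2})'`. -/
def optGamma (t : ℝ) : ℝ := xiD3 P c t / (2 * xiD2 P c t * √(xiD2 P c t))

theorem optGamma_nonneg {t : ℝ} (ht : 0 ≤ t) : 0 ≤ optGamma P c t := by
  have := xiD2_nonneg P c ht
  exact div_nonneg (xiD3_nonneg P c ht) (by positivity)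

theorem measurable_optGamma : Measurable (optGamma P c) := by
  have h2 := (continuous_xiD2 P c).measurable
  have h3 := (continuous_xiD3 P c).measurable
  unfold optGamma
  fun_prop

variable {P c}

theorem xiD2_pos (hc : ∃ k ∈ Finset.Icc 2 P, c k ≠ 0) {t : ℝ}
    (ht : 0 < t) : 0 < xiD2 P c t := by
  obtain ⟨k₀, hk₀, hck₀⟩ := hc
  refine Finset.sum_pos' (fun k hk => ?_) ⟨k₀, hk₀, ?_⟩
  · have hk : (2 : ℝ) ≤ k := by exact_mod_cast (Finset.mem_Icc.1 hk).1
    have : (0 : ℝ) ≤ k - 1 := by linarith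
    positivity
  · have hk : (2 : ℝ) ≤ k₀ := by exact_mod_cast (Finset.mem_Icc.1 hk₀).1
    have : (0 : ℝ) < k₀ - 1 := by linarith
    positivity

theorem continuousOn_optGamma (hc : ∃ k ∈ Finset.Icc 2 P, c k ≠ 0) :
    ContinuousOn (optGamma P c) (Ioi 0) := by
  have h2 := continuous_xiD2 P c
  have h3 := continuous_xiD3 P c
  refine ContinuousOn.div (by fun_prop) (by fun_prop) fun t ht => ?_
  have := xiD2_pos hc ht
  positivity

theorem hasDerivAt_neg_inv_sqrt_xiD2 (hc : ∃ k ∈ Finset.Icc 2 P, c k ≠ 0) {t : ℝ} (ht : 0 < t) :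
    HasDerivAt (fun s => -(√(xiD2 P c s))⁻¹) (optGamma P c t) t := by
  have hpos := xiD2_pos hc ht
  refine (((hasDerivAt_xiD2 P c t).sqrt hpos.ne').inv (Real.sqrt_pos.2 hpos).ne').neg.congr_deriv ?_
  rw [Real.sq_sqrt hpos.le, optGamma]
  ring

end Mixture

section Integrals

theorem ofReal_setIntegral_Ioo {f : ℝ → ℝ} {a b : ℝ} (hf : ContinuousOn f (Icc a b))
    (h₀ : ∀ t ∈ Ioo a b, 0 ≤ f t) :
    ENNReal.ofReal (∫ t in Ioo a b, f t) = ∫⁻ t in Ioo a b, ENNReal.ofReal (f t) :=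
  ofReal_integral_eq_lintegral_ofReal (hf.integrableOn_Icc.mono_set Ioo_subset_Icc_self)
    ((ae_restrict_iff' measurableSet_Ioo).2 (ae_of_all _ h₀))

theorem setLIntegral_ofReal_indicator {s T : Set ℝ} (hT : MeasurableSet T) (f : ℝ → ℝ) :
    ∫⁻ t in s, ENNReal.ofReal (T.indicator f t) = ∫⁻ t in T ∩ s, ENNReal.ofReal (f t) := by
  rw [← setLIntegral_indicator hT]
  congr with t
  by_cases ht : t ∈ T <;> simp [ht]

theorem continuous_setIntegral_Ioo_comp_max {f : ℝ → ℝ} (hf : Continuous f) {a b : ℝ}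
    (hab : a ≤ b) : Continuous fun ε => ∫ t in Ioo a b, f (max t ε) := by
  simp_rw [← integral_Ioc_eq_integral_Ioo, ← intervalIntegral.integral_of_le hab]
  exact intervalIntegral.continuous_parametric_intervalIntegral_of_continuous'
    (f := fun ε t => f (max t ε)) (hf.comp (continuous_snd.max continuous_fst)) a b

theorem gammaLInt_indicator_Ioi {g g' : ℝ → ℝ} {ε b t : ℝ} (hε : 0 ≤ ε)
    (hg : ∀ s ∈ Icc ε b, HasDerivAt g (g' s) s) (hg' : ContinuousOn g' (Icc ε b))
    (hg'₀ : ∀ s ∈ Icc ε b, 0 ≤ g' s) (htb : t ≤ b) :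
    gammaLInt ((Ioi ε).indicator g') t = ENNReal.ofReal (g (max t ε) - g ε) := by
  rw [gammaLInt, setLIntegral_ofReal_indicator measurableSet_Ioi, inter_comm, Ioo_inter_Ioi,
    max_eq_right hε]
  rcases le_total t ε with htε | hεt
  · simp [Ioo_eq_empty (not_lt.2 htε), max_eq_right htε]
  · have hsub : Icc ε t ⊆ Icc ε b := Icc_subset_Icc_right htb
    rw [max_eq_left hεt, ← ofReal_setIntegral_Ioo (hg'.mono hsub)
      fun s hs => hg'₀ s (hsub (Ioo_subset_Icc_self hs)), ← integral_Ioc_eq_integral_Ioo,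
      ← intervalIntegral.integral_of_le hεt, intervalIntegral.integral_eq_sub_of_hasDerivAt
        (fun s hs => hg s (hsub (by rwa [uIcc_of_le hεt] at hs)))
        ((hg'.mono hsub).intervalIntegrable_of_Icc hεt)]

end Integrals

section AMGM

theorem two_mul_ofReal_sqrt_le {a : ℝ} (ha : 0 ≤ a) (Γ : ℝ) :
    2 * ENNReal.ofReal √a ≤ ENNReal.ofReal (a * Γ) + (ENNReal.ofReal Γ)⁻¹ := by
  rcases le_or_gt Γ 0 with hΓ | hΓ
  · simp [ENNReal.ofReal_eq_zero.2 hΓ]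
  rw [← ENNReal.ofReal_inv_of_pos hΓ, ← ENNReal.ofReal_add (by positivity) (by positivity),
    ← ENNReal.ofReal_ofNat 2, ← ENNReal.ofReal_mul zero_le_two]
  refine ENNReal.ofReal_le_ofReal ?_
  have hsq : √a ^ 2 = a := Real.sq_sqrt ha
  have key : a * Γ + Γ⁻¹ - 2 * √a = (√a * Γ - 1) ^ 2 / Γ := by
    field_simp
    linear_combination (-Γ ^ 2) * hsq
  have := div_nonneg (sq_nonneg (√a * Γ - 1)) hΓ.le
  linarith

theorem ofReal_mul_inv_sqrt_add_le {a b : ℝ} (hab : a ≤ b) (hb : 0 < b) :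
    ENNReal.ofReal (a * (√b)⁻¹) + (ENNReal.ofReal (√b)⁻¹)⁻¹ ≤ 2 * ENNReal.ofReal √b := by
  have hsb : 0 < √b := Real.sqrt_pos.2 hb
  rw [ENNReal.ofReal_inv_of_pos hsb, inv_inv, two_mul]
  refine add_le_add_left (ENNReal.ofReal_le_ofReal ?_) _
  calc a * (√b)⁻¹ ≤ b * (√b)⁻¹ := by gcongr
    _ = √b := by rw [← div_eq_mul_inv, Real.div_sqrt]

end AMGM

theorem ofReal_integral_sqrt_xiD2_le_PFunE (P : ℕ) (c : ℕ → ℝ) (γ : ℝ → ℝ) :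
    ENNReal.ofReal (∫ t in Ioo 0 1, √(xiD2 P c t)) ≤ PFunE P c γ := by
  refine le_iInf₂ fun L _ => ?_
  rw [ENNReal.le_div_iff_mul_le (by simp) (by simp), mul_comm,
    ofReal_setIntegral_Ioo (continuous_xiD2 P c).sqrt.continuousOn
      fun t _ => Real.sqrt_nonneg _,
    ← lintegral_const_mul' _ _ (by simp)]
  exact setLIntegral_mono' measurableSet_Ioo fun t ht =>
    two_mul_ofReal_sqrt_le (xiD2_nonneg P c ht.1.le) _

section Upper

variable {P : ℕ} {c : ℕ → ℝ} (hc : ∃ k ∈ Finset.Icc 2 P, c k ≠ 0) {ε : ℝ} (hε : 0 < ε)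
include hc hε

theorem gammaLInt_indicator_optGamma {t : ℝ} (ht : t ≤ 1) :
    gammaLInt ((Ioi ε).indicator (optGamma P c)) t
      = ENNReal.ofReal ((√(xiD2 P c ε))⁻¹ - (√(xiD2 P c (max t ε)))⁻¹) := by
  rw [gammaLInt_indicator_Ioi hε.le
    (fun s hs => hasDerivAt_neg_inv_sqrt_xiD2 hc (hε.trans_le hs.1))
    ((continuousOn_optGamma hc).mono fun s hs => hε.trans_le hs.1)
    (fun s hs => optGamma_nonneg P c (hε.le.trans hs.1)) ht]
  ring_nf

theorem indicator_optGamma_mem_calL : (Ioi ε).indicator (optGamma P c) ∈ calL P c := by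
  refine ⟨(measurable_optGamma P c).indicator measurableSet_Ioi,
    fun t _ => Set.indicator_nonneg (fun s hs => optGamma_nonneg P c (hε.le.trans hs.le)) t, ?_⟩
  have hint : IntegrableOn (fun t => xiD2 P c t * optGamma P c t) (Icc ε 1) :=
    ((continuous_xiD2 P c).continuousOn.mul
      ((continuousOn_optGamma hc).mono fun s hs => hε.trans_le hs.1)).integrableOn_Icc
  calc ∫⁻ t in Ioo 0 1, ENNReal.ofReal (xiD2 P c t * (Ioi ε).indicator (optGamma P c) t)
      = ∫⁻ t in Ioi ε ∩ Ioo 0 1, ENNReal.ofReal (xiD2 P c t * optGamma P c t) := by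
        simp_rw [← Set.indicator_mul_right]
        exact setLIntegral_ofReal_indicator measurableSet_Ioi _
    _ ≤ ∫⁻ t in Icc ε 1, ENNReal.ofReal (xiD2 P c t * optGamma P c t) :=
        lintegral_mono_set fun t ht => ⟨ht.1.le, ht.2.2.le⟩
    _ < ⊤ := hint.lintegral_lt_top

theorem PFunE_indicator_optGamma_le :
    PFunE P c ((Ioi ε).indicator (optGamma P c))
      ≤ ENNReal.ofReal (∫ t in Ioo 0 1, √(xiD2 P c (max t ε))) := by
  set L := (√(xiD2 P c ε))⁻¹
  have hanti : ∀ t, (√(xiD2 P c (max t ε)))⁻¹ ≤ L := fun t =>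
    inv_anti₀ (Real.sqrt_pos.2 (xiD2_pos hc hε)) (Real.sqrt_le_sqrt
      (monotoneOn_xiD2 P c hε.le (hε.le.trans (le_max_right t ε)) (le_max_right t ε)))
  have hL : gammaLInt ((Ioi ε).indicator (optGamma P c)) 1 ≤ ENNReal.ofReal L := by
    rw [gammaLInt_indicator_optGamma hc hε le_rfl]
    exact ENNReal.ofReal_le_ofReal (sub_le_self _ (by positivity))
  have hΓ : ∀ t ∈ Ioo (0 : ℝ) 1, L - (gammaLInt ((Ioi ε).indicator (optGamma P c)) t).toReal
      = (√(xiD2 P c (max t ε)))⁻¹ := fun t ht => by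
    rw [gammaLInt_indicator_optGamma hc hε ht.2.le, ENNReal.toReal_ofReal (sub_nonneg.2 (hanti t))]
    ring
  refine (iInf₂_le L hL).trans (ENNReal.div_le_of_le_mul ?_)
  have hcont : Continuous fun t => √(xiD2 P c (max t ε)) :=
    ((continuous_xiD2 P c).comp (continuous_id.max continuous_const)).sqrt
  rw [mul_comm, ofReal_setIntegral_Ioo hcont.continuousOn fun t _ => Real.sqrt_nonneg _,
    ← lintegral_const_mul' _ _ (by simp)]
  refine setLIntegral_mono' measurableSet_Ioo fun t ht => ?_
  rw [hΓ t ht]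
  exact ofReal_mul_inv_sqrt_add_le
    (monotoneOn_xiD2 P c ht.1.le (ht.1.le.trans (le_max_left t ε)) (le_max_left t ε))
    (xiD2_pos hc (hε.trans_le (le_max_right t ε)))

end Upper

theorem statement_15_general (P : ℕ) (c : ℕ → ℝ)
    (hc : ∃ k ∈ Finset.Icc 2 P, c k ≠ 0) :
    (⨅ γ ∈ calL P c, PFunE P c γ)
      = ENNReal.ofReal (∫ t in Set.Ioo (0 : ℝ) 1, Real.sqrt (xiD2 P c t)) := by
  set F : ℝ → ℝ := fun ε => ∫ t in Ioo 0 1, √(xiD2 P c (max t ε))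
  have hF₀ : F 0 = ∫ t in Ioo 0 1, √(xiD2 P c t) :=
    setIntegral_congr_fun measurableSet_Ioo fun t ht => by simp only [max_eq_left ht.1.le]
  have hF : Filter.Tendsto (fun ε => ENNReal.ofReal (F ε)) (nhdsWithin 0 (Ioi 0))
      (nhds (ENNReal.ofReal (∫ t in Ioo 0 1, √(xiD2 P c t)))) :=
    hF₀ ▸ ((ENNReal.continuous_ofReal.comp (continuous_setIntegral_Ioo_comp_max
      (continuous_xiD2 P c).sqrt zero_le_one)).tendsto 0).mono_left nhdsWithin_le_nhds
  refine le_antisymm (ge_of_tendsto hF ?_)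
    (le_iInf₂ fun γ _ => ofReal_integral_sqrt_xiD2_le_PFunE P c γ)
  filter_upwards [self_mem_nhdsWithin] with ε hε
  exact (iInf₂_le _ (indicator_optGamma_mem_calL hc hε)).trans (PFunE_indicator_optGamma_le hc hε)

/-- the extended Parisi variational principle over `ℒ` has value
`ALG = ∫₀¹ √(ξ''(t)) dt`. -/
theorem statement_15 (P : ℕ) (hP : 2 ≤ P) (c : ℕ → ℝ)
    (hc : ∃ k ∈ Finset.Icc 2 P, c k ≠ 0) :
    (⨅ γ ∈ calL P c, PFunE P c γ)
      = ENNReal.ofReal (∫ t in Set.Ioo (0 : ℝ) 1, Real.sqrt (xiD2 P c t)) :=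
  statement_15_general P c hc
end
end
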